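/- Let u, v, w, q, g, z, h, r be real numbers. Define F : ℝ³ → Matrix 3 3 ℝ by F(y) = [[0, u, v], [w, q, g + w·y₂], [z, h + u·y₂, r + (v+z)·y₂]], let B(y) = (F(y) − F(y)ᵀ)/2 be its antisymmetric part, and define the torsion H_{ijk}(y) = ∂_{y_i}B_{jk}(y) + ∂_{y_j}B_{ki}(y) + ∂_{y_k}B_{ij}(y). Then H_{ijk}(y) = 0 for all indices i,j,k ∈ {1,2,3} and all y ∈ ℝ³, i.e. the sigma model on the Manin triple (2|1) is torsionless. -/

import Mathlib

open Matrix

/-- The torsion potential of a sigma model tensor `F`: its antisymmetric part. -/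
noncomputable def Bpot (F : (Fin 3 → ℝ) → Matrix (Fin 3) (Fin 3) ℝ)
    (y : Fin 3 → ℝ) : Matrix (Fin 3) (Fin 3) ℝ :=
  (1 / 2 : ℝ) • (F y - (F y)ᵀ)

/-- The torsion `H_{ijk} = ∂ᵢ B_{jk} + ∂ⱼ B_{ki} + ∂ₖ B_{ij}` of a sigma model
tensor `F`, where `∂ᵢ` is the partial derivative in the `i`-th coordinate. -/
noncomputable def torsionH (F : (Fin 3 → ℝ) → Matrix (Fin 3) (Fin 3) ℝ)
    (y : Fin 3 → ℝ) (i j k : Fin 3) : ℝ :=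
  deriv (fun t => Bpot F (Function.update y i t) j k) (y i) +
  deriv (fun t => Bpot F (Function.update y j t) k i) (y j) +
  deriv (fun t => Bpot F (Function.update y k t) i j) (y k)

/-- The tensor `F` of the sigma model on the Manin triple `(2|1)`. -/
noncomputable def F21 (u v w q g z h r : ℝ) (y : Fin 3 → ℝ) : Matrix (Fin 3) (Fin 3) ℝ :=
  !![0, u,             v;
     w, q,             g + w * y 1;
     z, h + u * y 1,   r + (v + z) * y 1]

/-! The antisymmetric part of `F21` has constant entries `B₀₁, B₀₂`, and `B₁₂` depends on `y₁`
only. In three dimensions the torsion with distinct indices is a cyclic sum of derivatives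
`∂ᵢ B_{jk}` with `i ∉ {j, k}`, so it vanishes as soon as each `B_{jk}` is independent of the
remaining coordinate; with a repeated index it vanishes by antisymmetry of `B`. -/

section

variable (F : (Fin 3 → ℝ) → Matrix (Fin 3) (Fin 3) ℝ) (y : Fin 3 → ℝ)

lemma Bpot_transpose_apply (j k : Fin 3) : Bpot F y k j = -Bpot F y j k := by
  simp only [Bpot, Matrix.smul_apply, Matrix.sub_apply, transpose_apply, smul_eq_mul]
  ring

lemma Bpot_apply_self (j : Fin 3) : Bpot F y j j = 0 := by
  linarith [Bpot_transpose_apply F y j j]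

lemma torsionH_rotate (i j k : Fin 3) : torsionH F y i j k = torsionH F y j k i := by
  simp only [torsionH]
  ring

lemma torsionH_self_left (i k : Fin 3) : torsionH F y i i k = 0 := by
  simp only [torsionH, Bpot_apply_self, deriv_const, add_zero, Bpot_transpose_apply F _ k i,
    deriv.fun_neg, neg_add_cancel]

lemma torsionH_eq_zero_of_not_injective {i j k : Fin 3} (h : i = j ∨ j = k ∨ k = i) :
    torsionH F y i j k = 0 := by
  rcases h with rfl | rfl | rfl
  · exact torsionH_self_left F y i k
  · exact (torsionH_rotate F y i j j).trans (torsionH_self_left F y j i)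
  · exact (torsionH_rotate F y k k j).symm.trans (torsionH_self_left F y k j)

lemma torsionH_eq_zero_of_independent
    (hF : ∀ i j k : Fin 3, i ≠ j → i ≠ k →
      ∀ x t, Bpot F (Function.update x i t) j k = Bpot F x j k)
    (i j k : Fin 3) : torsionH F y i j k = 0 := by
  by_cases hrep : i = j ∨ j = k ∨ k = i
  · exact torsionH_eq_zero_of_not_injective F y hrep
  push Not at hrep
  obtain ⟨hij, hjk, hki⟩ := hrep
  simp only [torsionH, hF i j k hij hki.symm, hF j k i hjk hij.symm, hF k i j hki hjk.symm,
    deriv_const, add_zero]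

end

lemma Bpot_F21_update_eq (u v w q g z h r : ℝ) (i j k : Fin 3) (hij : i ≠ j) (hik : i ≠ k)
    (y : Fin 3 → ℝ) (t : ℝ) :
    Bpot (F21 u v w q g z h r) (Function.update y i t) j k = Bpot (F21 u v w q g z h r) y j k := by
  fin_cases i <;> fin_cases j <;> fin_cases k <;>
    simp_all [Bpot, F21]

/-- The sigma model on the Manin triple `(2|1)` is torsionless. -/
theorem torsion21_eq_zero (u v w q g z h r : ℝ) :
    ∀ (y : Fin 3 → ℝ) (i j k : Fin 3), torsionH (F21 u v w q g z h r) y i j k = 0 :=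
  fun y => torsionH_eq_zero_of_independent _ y (Bpot_F21_update_eq u v w q g z h r)
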